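/- Fix u, v ∈ ℂ with u − v ≠ 0 and u − v + cκ ≠ 0, and let T(u), T(v) ∈ M_N(A). Then the RTT relation R(u,v) T₁(u) T₂(v) = T₂(v) T₁(u) R(u,v) holds if and only if for all indices −n ≤ i, j, k, l ≤ n the entrywise commutation relation holds: [T_{i,j}(u), T_{k,l}(v)] = (c/(u−v)) ( T_{k,j}(v) T_{i,l}(u) − T_{k,j}(u) T_{i,l}(v) ) + (c/(u−v+cκ)) ( δ_{k,−i} Σ_{p=−n}^{n} T_{p,j}(u) T_{−p,l}(v) − δ_{l,−j} Σ_{p=−n}^{n} T_{k,−p}(v) T_{i,p}(u) ). -/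

import Mathlib

open scoped Kronecker

noncomputable section

/-- Index set `{-n, …, n}` for matrices of size `N = 2n+1`. -/
abbrev Idx (n : ℕ) : Type := {i : ℤ // i ∈ Finset.Icc (-(n : ℤ)) (n : ℤ)}

/-- Negation `i ↦ -i` on the index set. -/
def Idx.neg {n : ℕ} (i : Idx n) : Idx n :=
  ⟨-i.1, by
    have h := Finset.mem_Icc.mp i.2
    exact Finset.mem_Icc.mpr ⟨by omega, by omega⟩⟩

/-- Matrix unit `e_{i,j}`. -/
def matE {n : ℕ} (i j : Idx n) : Matrix (Idx n) (Idx n) ℂ :=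
  Matrix.single i j 1

/-- `P = Σ_{i,j} e_{i,j} ⊗ e_{j,i}`. -/
def Pmat (n : ℕ) : Matrix (Idx n × Idx n) (Idx n × Idx n) ℂ :=
  ∑ i : Idx n, ∑ j : Idx n, matE i j ⊗ₖ matE j i

/-- `Q = Σ_{i,j} e_{i,j} ⊗ e_{-i,-j}`. -/
def Qmat (n : ℕ) : Matrix (Idx n × Idx n) (Idx n × Idx n) ℂ :=
  ∑ i : Idx n, ∑ j : Idx n, matE i j ⊗ₖ matE i.neg j.neg

/-- `κ = n - 1/2`. -/
def kappa (n : ℕ) : ℂ := (n : ℂ) - 1 / 2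

/-- The `o_{2n+1}`-invariant `R`-matrix
`R(u,v) = I⊗I + (c/(u−v)) P − (c/(u−v+cκ)) Q`. -/
def Rmat (n : ℕ) (c u v : ℂ) : Matrix (Idx n × Idx n) (Idx n × Idx n) ℂ :=
  1 + (c / (u - v)) • Pmat n - (c / (u - v + c * kappa n)) • Qmat n


/-- The RTT relation at `(u,v)` for a pair of matrices with entries in a
ℂ-algebra `A`: `R(u,v) T₁(u) T₂(v) = T₂(v) T₁(u) R(u,v)`. -/
def RTTrel (n : ℕ) (c u v : ℂ) {A : Type*} [Ring A] [Algebra ℂ A]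
    (Tu Tv : Matrix (Idx n) (Idx n) A) : Prop :=
  (Rmat n c u v).map (algebraMap ℂ A) * (Tu ⊗ₖ (1 : Matrix (Idx n) (Idx n) A)) *
      ((1 : Matrix (Idx n) (Idx n) A) ⊗ₖ Tv) =
    ((1 : Matrix (Idx n) (Idx n) A) ⊗ₖ Tv) * (Tu ⊗ₖ (1 : Matrix (Idx n) (Idx n) A)) *
      (Rmat n c u v).map (algebraMap ℂ A)

/-!
Everything is computed entrywise. `P` swaps the two tensor factors and `Q` contracts them,
`(Q X)_{(i,k),y} = δ_{k,-i} Σ_p X_{(p,-p),y}`, while `T₁(u) T₂(v)` and `T₂(v) T₁(u)` have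
`((i,k),(j,l))` entries `T_{ij}(u) T_{kl}(v)` and `T_{kl}(v) T_{ij}(u)`. Comparing the
`((i,k),(j,l))` entries of the two sides of the RTT relation and moving the identity terms to
one side gives exactly the stated commutation relation.
-/

lemma Idx.neg_neg {n : ℕ} (i : Idx n) : i.neg.neg = i := Subtype.ext (_root_.neg_neg i.1)

lemma Idx.neg_eq_iff_eq_neg {n : ℕ} {i j : Idx n} : i.neg = j ↔ i = j.neg := by
  constructor <;> rintro rfl <;> simp [Idx.neg_neg]

lemma Pmat_apply {n : ℕ} (i k p q : Idx n) :
    Pmat n (i, k) (p, q) = if q = i ∧ k = p then 1 else 0 := by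
  simp [Pmat, matE, Matrix.sum_apply, Matrix.single_apply, ite_and]

lemma Qmat_apply {n : ℕ} (i k p q : Idx n) :
    Qmat n (i, k) (p, q) = if k = i.neg ∧ q = p.neg then 1 else 0 := by
  simp [Qmat, matE, Matrix.sum_apply, Matrix.single_apply, ite_and, Idx.neg_eq_iff_eq_neg]

lemma map_algebraMap_mul_apply {R A l m o : Type*} [CommSemiring R] [Semiring A] [Algebra R A]
    [Fintype m] (M : Matrix l m R) (X : Matrix m o A) (i : l) (j : o) :
    (M.map (algebraMap R A) * X) i j = ∑ x, M i x • X x j := by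
  simp [Matrix.mul_apply, Algebra.smul_def]

lemma mul_map_algebraMap_apply {R A l m o : Type*} [CommSemiring R] [Semiring A] [Algebra R A]
    [Fintype m] (X : Matrix l m A) (M : Matrix m o R) (i : l) (j : o) :
    (X * M.map (algebraMap R A)) i j = ∑ x, M x j • X i x := by
  simp [Matrix.mul_apply, Algebra.smul_def, Algebra.commutes]

section Kronecker

variable {m α : Type*} [Fintype m] [DecidableEq m] [Semiring α]

lemma kronecker_one_mul_one_kronecker_apply (T S : Matrix m m α) (i k j l : m) :
    ((T ⊗ₖ (1 : Matrix m m α)) * ((1 : Matrix m m α) ⊗ₖ S)) (i, k) (j, l) = T i j * S k l := by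
  simp [Matrix.mul_apply, Fintype.sum_prod_type, Matrix.one_apply]

lemma one_kronecker_mul_kronecker_one_apply (T S : Matrix m m α) (i k j l : m) :
    (((1 : Matrix m m α) ⊗ₖ S) * (T ⊗ₖ (1 : Matrix m m α))) (i, k) (j, l) = S k l * T i j := by
  simp [Matrix.mul_apply, Fintype.sum_prod_type, Matrix.one_apply]

end Kronecker

section RMatrix

variable {n : ℕ} {A ι : Type*} [Ring A] [Algebra ℂ A]

lemma Pmat_map_mul_apply (X : Matrix (Idx n × Idx n) ι A) (i k : Idx n) (y : ι) :
    ((Pmat n).map (algebraMap ℂ A) * X) (i, k) y = X (k, i) y := by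
  simp [map_algebraMap_mul_apply, Fintype.sum_prod_type, Pmat_apply, ite_and]

lemma mul_Pmat_map_apply (X : Matrix ι (Idx n × Idx n) A) (x : ι) (j l : Idx n) :
    (X * (Pmat n).map (algebraMap ℂ A)) x (j, l) = X x (l, j) := by
  simp [mul_map_algebraMap_apply, Fintype.sum_prod_type, Pmat_apply, ite_and]

lemma Qmat_map_mul_apply (X : Matrix (Idx n × Idx n) ι A) (i k : Idx n) (y : ι) :
    ((Qmat n).map (algebraMap ℂ A) * X) (i, k) y =
      if k = i.neg then ∑ p : Idx n, X (p, p.neg) y else 0 := by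
  simp [map_algebraMap_mul_apply, Fintype.sum_prod_type, Qmat_apply, ite_and]

lemma mul_Qmat_map_apply (X : Matrix ι (Idx n × Idx n) A) (x : ι) (j l : Idx n) :
    (X * (Qmat n).map (algebraMap ℂ A)) x (j, l) =
      if l = j.neg then ∑ p : Idx n, X x (p, p.neg) else 0 := by
  simp [mul_map_algebraMap_apply, Fintype.sum_prod_type, Qmat_apply, ite_and]

lemma Rmat_map (c u v : ℂ) :
    (Rmat n c u v).map (algebraMap ℂ A) =
      1 + (c / (u - v)) • (Pmat n).map (algebraMap ℂ A) -
        (c / (u - v + c * kappa n)) • (Qmat n).map (algebraMap ℂ A) := by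
  have h_smul (r : ℂ) (a : ℂ) : algebraMap ℂ A (r • a) = r • algebraMap ℂ A a := by
    simp [Algebra.smul_def]
  rw [Rmat, Matrix.map_sub _ (map_sub _), Matrix.map_add _ (map_add _),
    Matrix.map_one _ (map_zero _) (map_one _), Matrix.map_smul _ _ (h_smul _),
    Matrix.map_smul _ _ (h_smul _)]

lemma Rmat_map_mul_apply (c u v : ℂ) (X : Matrix (Idx n × Idx n) ι A) (i k : Idx n) (y : ι) :
    ((Rmat n c u v).map (algebraMap ℂ A) * X) (i, k) y =
      X (i, k) y + (c / (u - v)) • X (k, i) y -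
        (c / (u - v + c * kappa n)) • (if k = i.neg then ∑ p : Idx n, X (p, p.neg) y else 0) := by
  rw [Rmat_map, Matrix.sub_mul, Matrix.add_mul, Matrix.smul_mul, Matrix.smul_mul, Matrix.one_mul,
    Matrix.sub_apply, Matrix.add_apply, Matrix.smul_apply, Matrix.smul_apply,
    Pmat_map_mul_apply, Qmat_map_mul_apply]

lemma mul_Rmat_map_apply (c u v : ℂ) (X : Matrix ι (Idx n × Idx n) A) (x : ι) (j l : Idx n) :
    (X * (Rmat n c u v).map (algebraMap ℂ A)) x (j, l) =
      X x (j, l) + (c / (u - v)) • X x (l, j) -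
        (c / (u - v + c * kappa n)) • (if l = j.neg then ∑ p : Idx n, X x (p, p.neg) else 0) := by
  rw [Rmat_map, Matrix.mul_sub, Matrix.mul_add, Matrix.mul_smul, Matrix.mul_smul, Matrix.mul_one,
    Matrix.sub_apply, Matrix.add_apply, Matrix.smul_apply, Matrix.smul_apply,
    mul_Pmat_map_apply, mul_Qmat_map_apply]

end RMatrix

lemma add_smul_sub_smul_eq_iff {R M : Type*} [Ring R] [AddCommGroup M] [Module R M]
    (a b : R) (x x' y y' z z' : M) :
    x + a • y - b • z = x' + a • y' - b • z' ↔ x - x' = a • (y' - y) + b • (z - z') := by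
  rw [← sub_eq_zero, ← sub_eq_zero (a := x - x'), smul_sub, smul_sub]
  constructor <;> intro h <;> rw [← h] <;> abel

theorem statement5_general (n : ℕ) (c : ℂ)
    {A : Type*} [Ring A] [Algebra ℂ A]
    (u v : ℂ) (Tu Tv : Matrix (Idx n) (Idx n) A) :
    RTTrel n c u v Tu Tv ↔
      ∀ i j k l : Idx n,
        Tu i j * Tv k l - Tv k l * Tu i j =
          (c / (u - v)) • (Tv k j * Tu i l - Tu k j * Tv i l) +
          (c / (u - v + c * kappa n)) •
            ((if k = i.neg then ∑ p : Idx n, Tu p j * Tv p.neg l else 0) -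
             (if l = j.neg then ∑ p : Idx n, Tv k p.neg * Tu i p else 0)) := by
  rw [RTTrel, ← Matrix.ext_iff]
  simp only [Prod.forall, Matrix.mul_assoc ((Rmat n c u v).map _), Rmat_map_mul_apply,
    mul_Rmat_map_apply, kronecker_one_mul_one_kronecker_apply,
    one_kronecker_mul_kronecker_one_apply, add_smul_sub_smul_eq_iff]
  exact ⟨fun h i j k l => h i k j l, fun h i k j l => h i j k l⟩

/-- the RTT relation holds iff for all indices `i, j, k, l` the
entrywise commutation relation
`[T_{i,j}(u), T_{k,l}(v)] = (c/(u−v))(T_{k,j}(v)T_{i,l}(u) − T_{k,j}(u)T_{i,l}(v))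
 + (c/(u−v+cκ))(δ_{k,−i} Σ_p T_{p,j}(u)T_{−p,l}(v) − δ_{l,−j} Σ_p T_{k,−p}(v)T_{i,p}(u))`
holds. -/
theorem statement5 (n : ℕ) (hn : 1 ≤ n) (c : ℂ) (hc : c ≠ 0)
    {A : Type*} [Ring A] [Algebra ℂ A]
    (u v : ℂ) (h0 : u - v ≠ 0) (h1 : u - v + c * kappa n ≠ 0)
    (Tu Tv : Matrix (Idx n) (Idx n) A) :
    RTTrel n c u v Tu Tv ↔
      ∀ i j k l : Idx n,
        Tu i j * Tv k l - Tv k l * Tu i j =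
          (c / (u - v)) • (Tv k j * Tu i l - Tu k j * Tv i l) +
          (c / (u - v + c * kappa n)) •
            ((if k = i.neg then ∑ p : Idx n, Tu p j * Tv p.neg l else 0) -
             (if l = j.neg then ∑ p : Idx n, Tv k p.neg * Tu i p else 0)) :=
  statement5_general n c u v Tu Tv
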